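/- Let $A$ be a $q \times p$ real matrix of full row rank, $\Sigma_y$ ($q \times q$) and $\Sigma_\theta$ ($p \times p$) symmetric positive definite, $\mu_y \in \mathbb R^q$, $\mu_\theta \in \mathbb R^p$. With $\tilde\Sigma := (A^\top \Sigma_y^{-1} A - A^\top(A\Sigma_\theta A^\top)^{-1}A + \Sigma_\theta^{-1})^{-1}$ and $\tilde\mu := \tilde\Sigma\big(A^\top \Sigma_y^{-1}\mu_y - A^\top(A\Sigma_\theta A^\top)^{-1}A\mu_\theta + \Sigma_\theta^{-1}\mu_\theta\big)$, we have $A\tilde\mu = \mu_y$. -/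

import Mathlib

/-!
Write the matrix inverted in `Σ̃` as `M = Aᵀ Σ_y⁻¹ A + N` with `N = Σ_θ⁻¹ - Aᵀ (A Σ_θ Aᵀ)⁻¹ A`.
Since `N` annihilates `Σ_θ Aᵀ`, we get `M Σ_θ Aᵀ = Aᵀ Σ_y⁻¹ (A Σ_θ Aᵀ)`, hence `A M⁻¹ Aᵀ = Σ_y`
(the covariance part). Then `A M⁻¹ M = A` forces `A M⁻¹ N = 0`, and
`A μ̃ = A M⁻¹ Aᵀ Σ_y⁻¹ μ_y + A M⁻¹ N μ_θ = μ_y`.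
-/

open Matrix

namespace Matrix

theorem vecMul_injective_of_rank_eq_card {K m n : Type*} [Field K] [Fintype m] [Fintype n]
    {A : Matrix m n K} (hA : A.rank = Fintype.card m) : Function.Injective A.vecMul := by
  rw [vecMul_injective_iff, linearIndependent_iff_card_eq_finrank_span, Set.finrank,
    ← rank_eq_finrank_span_row, hA]

section

variable {K m n : Type*} [CommRing K] [Fintype m] [Fintype n] [DecidableEq m] [DecidableEq n]

theorem inv_sub_mul_inv_mul_mul_mul_eq_zero {S : Matrix n n K} {C : Matrix n m K}
    {A : Matrix m n K} (hS : IsUnit S.det) (hASC : IsUnit (A * S * C).det) :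
    (S⁻¹ - C * (A * S * C)⁻¹ * A) * (S * C) = 0 := by
  calc (S⁻¹ - C * (A * S * C)⁻¹ * A) * (S * C)
      = S⁻¹ * S * C - C * ((A * S * C)⁻¹ * (A * S * C)) := by
        simp only [Matrix.sub_mul, Matrix.mul_assoc]
    _ = 0 := by rw [nonsing_inv_mul _ hS, nonsing_inv_mul _ hASC, Matrix.one_mul,
        Matrix.mul_one, sub_self]

variable {A : Matrix m n K} {C : Matrix n m K} {P : Matrix m m K} {N : Matrix n n K}

theorem mul_inv_mul_eq_inv_of_mul_eq_zero {B : Matrix n m K} (hP : IsUnit P.det)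
    (hAB : IsUnit (A * B).det) (hNB : N * B = 0) (hM : IsUnit (C * P * A + N).det) :
    A * (C * P * A + N)⁻¹ * C = P⁻¹ := by
  set M := C * P * A + N
  have hMB : M * (B * (A * B)⁻¹ * P⁻¹) = C := by
    calc M * (B * (A * B)⁻¹ * P⁻¹)
        = C * P * ((A * B) * (A * B)⁻¹) * P⁻¹ + N * B * ((A * B)⁻¹ * P⁻¹) := by
          simp only [M, Matrix.add_mul, Matrix.mul_assoc]
      _ = C := by rw [mul_nonsing_inv _ hAB, hNB, Matrix.zero_mul, add_zero, Matrix.mul_one,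
          Matrix.mul_assoc, mul_nonsing_inv _ hP, Matrix.mul_one]
  have hMC : M⁻¹ * C = B * (A * B)⁻¹ * P⁻¹ := by
    rw [← hMB, ← Matrix.mul_assoc, nonsing_inv_mul _ hM, Matrix.one_mul]
  rw [Matrix.mul_assoc, hMC, ← Matrix.mul_assoc, ← Matrix.mul_assoc, mul_nonsing_inv _ hAB,
    Matrix.one_mul]

theorem mul_inv_mul_eq_zero_of_mul_inv_mul_eq_inv (hP : IsUnit P.det)
    (hM : IsUnit (C * P * A + N).det) (hAMC : A * (C * P * A + N)⁻¹ * C = P⁻¹) :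
    A * (C * P * A + N)⁻¹ * N = 0 := by
  set M := C * P * A + N
  have hAMM : A * M⁻¹ * M = A := by rw [Matrix.mul_assoc, nonsing_inv_mul _ hM, Matrix.mul_one]
  calc A * M⁻¹ * N = A * M⁻¹ * M - A * M⁻¹ * C * P * A := by
        simp only [M, Matrix.mul_add, Matrix.mul_assoc, add_sub_cancel_left]
    _ = 0 := by rw [hAMM, hAMC, nonsing_inv_mul _ hP, Matrix.one_mul, sub_self]

theorem mulVec_inv_mulVec_eq_of_mul_eq_zero {B : Matrix n m K} (hP : IsUnit P.det)
    (hAB : IsUnit (A * B).det) (hNB : N * B = 0) (hM : IsUnit (C * P * A + N).det)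
    (y : m → K) (x : n → K) :
    A *ᵥ ((C * P * A + N)⁻¹ *ᵥ (C *ᵥ (P *ᵥ y) + N *ᵥ x)) = y := by
  have hAMC := mul_inv_mul_eq_inv_of_mul_eq_zero hP hAB hNB hM
  have hAMN := mul_inv_mul_eq_zero_of_mul_inv_mul_eq_inv hP hM hAMC
  simp only [mulVec_add, mulVec_mulVec, ← Matrix.mul_assoc, hAMC, hAMN,
    nonsing_inv_mul _ hP, one_mulVec, zero_mulVec, add_zero]

end

end Matrix

theorem stmt7_general
    (p q : ℕ)
    (A : Matrix (Fin q) (Fin p) ℝ) (hA : A.rank = q)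
    (Sy : Matrix (Fin q) (Fin q) ℝ) (hSy : Sy.PosDef)
    (St : Matrix (Fin p) (Fin p) ℝ) (hSt : St.PosDef)
    (muY : Fin q → ℝ) (muT : Fin p → ℝ)
    (tS : Matrix (Fin p) (Fin p) ℝ)
    (htS : tS = (Aᵀ * Sy⁻¹ * A - Aᵀ * (A * St * Aᵀ)⁻¹ * A + St⁻¹)⁻¹)
    (htS_inv : IsUnit (Aᵀ * Sy⁻¹ * A - Aᵀ * (A * St * Aᵀ)⁻¹ * A + St⁻¹).det)
    (tmu : Fin p → ℝ)
    (htmu : tmu = tS.mulVec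
      (Aᵀ.mulVec (Sy⁻¹.mulVec muY) - Aᵀ.mulVec ((A * St * Aᵀ)⁻¹.mulVec (A.mulVec muT))
        + St⁻¹.mulVec muT)) :
    A.mulVec tmu = muY := by
  have hS : (A * St * Aᵀ).PosDef := by
    simpa using hSt.mul_mul_conjTranspose_same
      (vecMul_injective_of_rank_eq_card (by rwa [Fintype.card_fin]))
  set N := St⁻¹ - Aᵀ * (A * St * Aᵀ)⁻¹ * A
  have hNB : N * (St * Aᵀ) = 0 :=
    inv_sub_mul_inv_mul_mul_mul_eq_zero hSt.det_pos.ne'.isUnit hS.det_pos.ne'.isUnit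
  have hM : Aᵀ * Sy⁻¹ * A - Aᵀ * (A * St * Aᵀ)⁻¹ * A + St⁻¹ = Aᵀ * Sy⁻¹ * A + N := by
    simp only [N]; abel
  have hv : Aᵀ *ᵥ (Sy⁻¹ *ᵥ muY) - Aᵀ *ᵥ ((A * St * Aᵀ)⁻¹ *ᵥ (A *ᵥ muT)) + St⁻¹ *ᵥ muT
      = Aᵀ *ᵥ (Sy⁻¹ *ᵥ muY) + N *ᵥ muT := by
    simp only [N, sub_mulVec, mulVec_mulVec, Matrix.mul_assoc]; abel
  rw [htmu, htS, hv, hM]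
  rw [hM] at htS_inv
  exact mulVec_inv_mulVec_eq_of_mul_eq_zero (isUnit_nonsing_inv_det _ hSy.det_pos.ne'.isUnit)
    (by simpa only [Matrix.mul_assoc] using hS.det_pos.ne'.isUnit) hNB htS_inv muY muT

/-- mean part of Lemma B.1: with
`Σ̃ = (Aᵀ Σ_y⁻¹ A - Aᵀ (A Σ_θ Aᵀ)⁻¹ A + Σ_θ⁻¹)⁻¹` and
`μ̃ = Σ̃ (Aᵀ Σ_y⁻¹ μ_y - Aᵀ (A Σ_θ Aᵀ)⁻¹ A μ_θ + Σ_θ⁻¹ μ_θ)`, we have `A μ̃ = μ_y`. -/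
theorem stmt7
    (p q : ℕ)
    (A : Matrix (Fin q) (Fin p) ℝ) (hA : A.rank = q)
    (Sy : Matrix (Fin q) (Fin q) ℝ) (hSy : Sy.PosDef) (hSy_symm : Sy.IsSymm)
    (St : Matrix (Fin p) (Fin p) ℝ) (hSt : St.PosDef) (hSt_symm : St.IsSymm)
    (muY : Fin q → ℝ) (muT : Fin p → ℝ)
    (tS : Matrix (Fin p) (Fin p) ℝ)
    (htS : tS = (Aᵀ * Sy⁻¹ * A - Aᵀ * (A * St * Aᵀ)⁻¹ * A + St⁻¹)⁻¹)
    (htS_inv : IsUnit (Aᵀ * Sy⁻¹ * A - Aᵀ * (A * St * Aᵀ)⁻¹ * A + St⁻¹).det)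
    (tmu : Fin p → ℝ)
    (htmu : tmu = tS.mulVec
      (Aᵀ.mulVec (Sy⁻¹.mulVec muY) - Aᵀ.mulVec ((A * St * Aᵀ)⁻¹.mulVec (A.mulVec muT))
        + St⁻¹.mulVec muT)) :
    A.mulVec tmu = muY :=
  stmt7_general p q A hA Sy hSy St hSt muY muT tS htS htS_inv tmu htmu
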